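/- arXiv:1501.04394 — 4 statements merged into one kernel-verified Lean document; each statement's English description precedes it below -/
import Mathlib

section
/- If S is a set of column indices of B(l,r,L) such that all columns indexed by S are pairwise distinct (as vectors), then S is not a nonempty stopping set of B(l,r,L). -/
open Finset

/-- A set of column indices `S` is a stopping set of `H` if the submatrix of `H`
on the columns in `S` has no row of Hamming weight exactly one. -/
def isStoppingSet {m n : ℕ} (H : Matrix (Fin m) (Fin n) (ZMod 2)) (S : Finset (Fin n)) : Prop :=
  ∀ i : Fin m, (S.filter (fun j => H i j = 1)).card ≠ 1

/-- `len S = 1 + max_{a,b ∈ S} |a - b|` (for nonempty `S`; truncated subtraction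
over both orders realizes the absolute value). -/
def len {n : ℕ} (S : Finset (Fin n)) : ℕ :=
  1 + S.sup (fun a => S.sup (fun b => (a : ℕ) - (b : ℕ)))

/-- `spanM H` is the minimum of `len S` over nonempty stopping sets `S` of `H`. -/
noncomputable def spanM {m n : ℕ} (H : Matrix (Fin m) (Fin n) (ZMod 2)) : ℕ :=
  sInf {w | ∃ S : Finset (Fin n), S.Nonempty ∧ isStoppingSet H S ∧ len S = w}

/-- A nonempty stopping set is irreducible (minimal) if no proper nonempty subset
is a stopping set. -/
def isIrreducible {m n : ℕ} (H : Matrix (Fin m) (Fin n) (ZMod 2)) (S : Finset (Fin n)) : Prop :=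
  S.Nonempty ∧ isStoppingSet H S ∧ ∀ S' : Finset (Fin n), S' ⊂ S → S'.Nonempty → ¬ isStoppingSet H S'

/-- The base matrix `B(l,r,L)` with `k = r/l` (0-indexed): column `q` belongs to
block `q / k` and has ones exactly in rows `q/k, …, q/k + (l-1)`. -/
def B (l k L : ℕ) : Matrix (Fin (L + l - 1)) (Fin (k * L)) (ZMod 2) :=
  fun p q => if (q : ℕ) / k ≤ (p : ℕ) ∧ (p : ℕ) ≤ (q : ℕ) / k + (l - 1) then 1 else 0

theorem not_isStoppingSet_of_unique_one {m n : ℕ} {H : Matrix (Fin m) (Fin n) (ZMod 2)}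
    {S : Finset (Fin n)} {i : Fin m} {j : Fin n} (hj : j ∈ S) (hij : H i j = 1)
    (hunique : ∀ j' ∈ S, H i j' = 1 → j' = j) :
    ¬ isStoppingSet H S := by
  intro hS
  apply hS i
  rw [card_eq_one]
  refine ⟨j, ?_⟩
  ext j'
  simp only [mem_filter, mem_singleton]
  exact ⟨fun ⟨hj', h1⟩ => hunique j' hj' h1, by rintro rfl; exact ⟨hj, hij⟩⟩

theorem B_eq_one_iff {l k L : ℕ} {p : Fin (L + l - 1)} {q : Fin (k * L)} :
    B l k L p q = 1 ↔ (q : ℕ) / k ≤ p ∧ (p : ℕ) ≤ (q : ℕ) / k + (l - 1) := by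
  unfold B
  split_ifs with h <;> simp [h]

theorem B_apply_eq_of_div_eq {l k L : ℕ} {α β : Fin (k * L)} (h : (α : ℕ) / k = (β : ℕ) / k)
    (p : Fin (L + l - 1)) : B l k L p α = B l k L p β := by
  simp [B, h]

theorem div_lt_add_sub_one {l k L : ℕ} (hl : 0 < l) (q : Fin (k * L)) :
    (q : ℕ) / k < L + l - 1 := by
  have := Nat.div_lt_of_lt_mul q.isLt
  omega

theorem not_stopping_of_distinct_columns_general (l k L : ℕ) (hl : 0 < l)
    (S : Finset (Fin (k * L)))
    (hdist : ∀ α ∈ S, ∀ β ∈ S, α ≠ β → ∃ p : Fin (L + l - 1), B l k L p α ≠ B l k L p β)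
    (hne : S.Nonempty) :
    ¬ isStoppingSet (B l k L) S := by
  have hinj : Set.InjOn (fun q : Fin (k * L) => (q : ℕ) / k) S := by
    intro α hα β hβ h
    by_contra hαβ
    obtain ⟨p, hp⟩ := hdist α hα β hβ hαβ
    exact hp (B_apply_eq_of_div_eq h p)
  -- the column of `S` with the least block `b` is the only one with a one in row `b`
  obtain ⟨q₀, hq₀, hmin⟩ := S.exists_min_image (fun q => (q : ℕ) / k) hne
  refine not_isStoppingSet_of_unique_one (i := ⟨_, div_lt_add_sub_one hl q₀⟩) hq₀
    (B_eq_one_iff.2 ⟨le_rfl, Nat.le_add_right _ _⟩) fun q hq hq1 => hinj hq hq₀ ?_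
  exact le_antisymm (B_eq_one_iff.1 hq1).1 (hmin q hq)

/-- If all columns of `B(l,r,L)` indexed by `S` are pairwise distinct as vectors,
then `S` is not a nonempty stopping set. -/
theorem not_stopping_of_distinct_columns (l k L : ℕ) (hl : 0 < l) (hk : 0 < k) (hL : 0 < L)
    (S : Finset (Fin (k * L)))
    (hdist : ∀ α ∈ S, ∀ β ∈ S, α ≠ β → ∃ p : Fin (L + l - 1), B l k L p α ≠ B l k L p β)
    (hne : S.Nonempty) :
    ¬ isStoppingSet (B l k L) S :=
  not_stopping_of_distinct_columns_general l k L hl S hdist hne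
end

section
/- Every nonempty stopping set of B(l,r,L) contains two distinct indices α, β belonging to the same block T_i (equivalently, with equal columns b_α = b_β). -/
open Finset

/-!
Let `α` be the smallest index of `S` and look at the top row of its column, row `α / k`. A column
with a one there lies in a block no later than that of `α`, and every column of `S` lies in a
block no earlier, so all columns of `S` meeting that row lie in the block of `α`. Since `α` meets
the row, the stopping condition forces a second one.
-/

theorem isStoppingSet.exists_ne_of_apply_eq_one {m n : ℕ} {H : Matrix (Fin m) (Fin n) (ZMod 2)}
    {S : Finset (Fin n)} (hS : isStoppingSet H S) {i : Fin m} {a : Fin n} (ha : a ∈ S)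
    (hia : H i a = 1) : ∃ b ∈ S, b ≠ a ∧ H i b = 1 := by
  have hpos : 0 < (S.filter (fun j => H i j = 1)).card :=
    card_pos.mpr ⟨a, mem_filter.mpr ⟨ha, hia⟩⟩
  have htwo : 1 < (S.filter (fun j => H i j = 1)).card := by have := hS i; omega
  obtain ⟨b, hb, hba⟩ := exists_mem_ne htwo a
  exact ⟨b, (mem_filter.mp hb).1, hba, (mem_filter.mp hb).2⟩

section BaseMatrix

variable {l k L : ℕ}

theorem B_apply_eq_one_iff {p : Fin (L + l - 1)} {q : Fin (k * L)} :
    B l k L p q = 1 ↔ (q : ℕ) / k ≤ p ∧ (p : ℕ) ≤ q / k + (l - 1) := by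
  unfold B
  split_ifs with h <;> simp [h]

theorem div_le_of_B_apply_eq_one {p : Fin (L + l - 1)} {q : Fin (k * L)}
    (h : B l k L p q = 1) : (q : ℕ) / k ≤ p :=
  (B_apply_eq_one_iff.mp h).1

def topRow (hl : 0 < l) (q : Fin (k * L)) : Fin (L + l - 1) :=
  ⟨q / k, by have := Nat.div_lt_of_lt_mul q.isLt; omega⟩

theorem B_topRow_self (hl : 0 < l) (q : Fin (k * L)) : B l k L (topRow hl q) q = 1 :=
  B_apply_eq_one_iff.mpr ⟨le_rfl, Nat.le_add_right _ _⟩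

end BaseMatrix

theorem stopping_contains_same_block_pair_general (l k L : ℕ) (hl : 0 < l)
    (S : Finset (Fin (k * L))) (hne : S.Nonempty) (hS : isStoppingSet (B l k L) S) :
    ∃ α ∈ S, ∃ β ∈ S, α ≠ β ∧ (α : ℕ) / k = (β : ℕ) / k := by
  obtain ⟨α, hαS, hαmin⟩ := S.exists_min_image (fun q => (q : ℕ)) hne
  obtain ⟨β, hβS, hβα, hβ⟩ := hS.exists_ne_of_apply_eq_one hαS (B_topRow_self hl α)
  have hβ_le : (β : ℕ) / k ≤ α / k := div_le_of_B_apply_eq_one hβ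
  have hα_le : (α : ℕ) / k ≤ β / k := Nat.div_le_div_right (hαmin β hβS)
  exact ⟨α, hαS, β, hβS, hβα.symm, le_antisymm hα_le hβ_le⟩

/-- Every nonempty stopping set of `B(l,r,L)` contains two distinct indices in the
same block (equivalently, with equal columns). -/
theorem stopping_contains_same_block_pair (l k L : ℕ) (hl : 0 < l) (hk : 0 < k) (hL : 0 < L)
    (S : Finset (Fin (k * L))) (hne : S.Nonempty) (hS : isStoppingSet (B l k L) S) :
    ∃ α ∈ S, ∃ β ∈ S, α ≠ β ∧ (α : ℕ) / k = (β : ℕ) / k :=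
  stopping_contains_same_block_pair_general l k L hl S hne hS
end

section
/- For the band splitting permutation f, there exist distinct indices α, β in the same block with |f^{-1}(α) - f^{-1}(β)| = L; hence the minimum of |f^{-1}(α) - f^{-1}(β)| over same-block pairs is exactly L. -/
/-!
Reading `γ - 1 = (s - 1) + (t - 1) k` in base `k` shows `f⁻¹ γ = ((γ - 1) % k) L + (γ - 1) / k + 1`.
Inside a block `(γ - 1) / k` is constant, so the gap between two of its indices is `L` times the
difference of their residues mod `k`: at least `L`, and exactly `L` for the indices `1, 2`.
-/

namespace BandSplitting

variable {k L : ℕ} {finv : ℕ → ℕ}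

theorem finv_eq_of_mem_Icc (hk : 0 < k)
    (hfinv : ∀ s ∈ Set.Icc 1 k, ∀ t ∈ Set.Icc 1 L, finv (s + (t - 1) * k) = (s - 1) * L + t)
    {γ : ℕ} (hγ : γ ∈ Set.Icc 1 (k * L)) :
    finv γ = (γ - 1) % k * L + (γ - 1) / k + 1 := by
  obtain ⟨hγ1, hγkL⟩ := hγ
  have hs : (γ - 1) % k + 1 ∈ Set.Icc 1 k := ⟨Nat.le_add_left 1 _, Nat.mod_lt _ hk⟩
  have ht : (γ - 1) / k + 1 ∈ Set.Icc 1 L := ⟨Nat.le_add_left 1 _, Nat.div_lt_of_lt_mul (by omega)⟩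
  have hdigits : (γ - 1) % k + 1 + (γ - 1) / k * k = γ := by
    have := Nat.mod_add_div' (γ - 1) k
    omega
  have h := hfinv _ hs _ ht
  simp only [Nat.add_sub_cancel, hdigits] at h
  omega

theorem finv_sub_finv_of_div_eq (hk : 0 < k)
    (hfinv : ∀ s ∈ Set.Icc 1 k, ∀ t ∈ Set.Icc 1 L, finv (s + (t - 1) * k) = (s - 1) * L + t)
    {α β : ℕ} (hα : α ∈ Set.Icc 1 (k * L)) (hβ : β ∈ Set.Icc 1 (k * L))
    (hblock : (α - 1) / k = (β - 1) / k) :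
    (finv α : ℤ) - finv β = (((α - 1) % k : ℕ) - ((β - 1) % k : ℕ) : ℤ) * L := by
  rw [finv_eq_of_mem_Icc hk hfinv hα, finv_eq_of_mem_Icc hk hfinv hβ, hblock]
  push_cast
  ring

theorem le_abs_finv_sub_finv (hk : 0 < k)
    (hfinv : ∀ s ∈ Set.Icc 1 k, ∀ t ∈ Set.Icc 1 L, finv (s + (t - 1) * k) = (s - 1) * L + t)
    {α β : ℕ} (hα : α ∈ Set.Icc 1 (k * L)) (hβ : β ∈ Set.Icc 1 (k * L)) (hne : α ≠ β)
    (hblock : (α - 1) / k = (β - 1) / k) :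
    (L : ℤ) ≤ |(finv α : ℤ) - finv β| := by
  have hres : (α - 1) % k ≠ (β - 1) % k := fun hmod =>
    hne (Nat.sub_one_cancel hα.1 hβ.1 (Nat.ext_div_modEq hblock hmod))
  have hres_gap : (1 : ℤ) ≤ |(((α - 1) % k : ℕ) - ((β - 1) % k : ℕ) : ℤ)| :=
    Int.one_le_abs (sub_ne_zero.mpr (Nat.cast_injective.ne hres))
  rw [finv_sub_finv_of_div_eq hk hfinv hα hβ hblock, abs_mul, Nat.abs_cast]
  exact le_mul_of_one_le_left (Int.natCast_nonneg L) hres_gap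

end BandSplitting

/-- There exist distinct same-block indices with `|f⁻¹(α) - f⁻¹(β)| = L`; hence the
minimum of `|f⁻¹(α) - f⁻¹(β)|` over same-block pairs is exactly `L`. -/
theorem band_splitting_inv_gap_tight (k L : ℕ) (hk : 2 ≤ k) (hL : 0 < L) (finv : ℕ → ℕ)
    (hfinv : ∀ s ∈ Set.Icc 1 k, ∀ t ∈ Set.Icc 1 L, finv (s + (t - 1) * k) = (s - 1) * L + t) :
    IsLeast {d : ℤ | ∃ α ∈ Set.Icc 1 (k * L), ∃ β ∈ Set.Icc 1 (k * L),
      α ≠ β ∧ (α - 1) / k = (β - 1) / k ∧ d = |(finv α : ℤ) - (finv β : ℤ)|} (L : ℤ) := by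
  have hkL : 2 ≤ k * L := le_mul_of_le_of_one_le hk hL
  have h1 : (1 : ℕ) ∈ Set.Icc 1 (k * L) := ⟨le_rfl, by omega⟩
  have h2 : (2 : ℕ) ∈ Set.Icc 1 (k * L) := ⟨by norm_num, hkL⟩
  have hblock : (2 - 1) / k = (1 - 1) / k := by simp [Nat.div_eq_of_lt (by omega : 1 < k)]
  refine ⟨⟨2, h2, 1, h1, by norm_num, hblock, ?_⟩, ?_⟩
  · rw [BandSplitting.finv_sub_finv_of_div_eq (by omega) hfinv h2 h1 hblock, Nat.mod_eq_of_lt (by omega : 1 < k)]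
    simp
  · rintro d ⟨α, hα, β, hβ, hne, hblock, rfl⟩
    exact BandSplitting.le_abs_finv_sub_finv (by omega) hfinv hα hβ hne hblock
end

section
/- The span of the permuted base matrix B*(l,r,L) (obtained by applying the band splitting permutation to the columns of B(l,r,L)) equals L+1, and thus W_max(B*(l,r,L)) = L. -/
open Finset

/-- The band splitting permutation, 0-indexed: position `j = s·L + t`
(`s ∈ [0,k)`, `t ∈ [0,L)`) is sent to column `s + t·k` of the base matrix. -/
def fnat (k L j : ℕ) : ℕ := j / L + (j % L) * k

/-- The permuted base matrix `B*(l,r,L)`: its `j`-th column is column `fnat k L j`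
of `B(l,r,L)`. -/
def Bstar (l k L : ℕ) : Matrix (Fin (L + l - 1)) (Fin (k * L)) (ZMod 2) :=
  fun p j => if (fnat k L (j : ℕ)) / k ≤ (p : ℕ) ∧
      (p : ℕ) ≤ (fnat k L (j : ℕ)) / k + (l - 1) then 1 else 0


/-!
Column `j` of `B*` has its ones in rows `j % L, …, j % L + l - 1`, so columns congruent
mod `L` coincide and `{0, L}` is a stopping set of length `L + 1`. Conversely, in a
nonempty set of length at most `L` the residues mod `L` are distinct, and the column with
the smallest residue is then the only one meeting the row of that residue.
-/

section StoppingSets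

variable {m n : ℕ} {H : Matrix (Fin m) (Fin n) (ZMod 2)}

lemma sub_lt_len {S : Finset (Fin n)} {a b : Fin n} (ha : a ∈ S) (hb : b ∈ S) :
    (a : ℕ) - b < len S := by
  have hab : (a : ℕ) - b ≤ S.sup fun b => (a : ℕ) - b :=
    le_sup (f := fun b : Fin n => (a : ℕ) - b) hb
  have ha' : (S.sup fun b => (a : ℕ) - b) ≤ S.sup fun a => S.sup fun b => (a : ℕ) - b :=
    le_sup (f := fun a : Fin n => S.sup fun b => (a : ℕ) - b) ha
  rw [len]
  omega

lemma len_pair {a b : Fin n} (hab : a ≤ b) : len {a, b} = b - a + 1 := by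
  simp only [len, sup_insert, sup_singleton, Nat.sub_self]
  have : (a : ℕ) ≤ b := hab
  omega

lemma isStoppingSet_pair {a b : Fin n} (hab : a ≠ b) (hcol : ∀ i, H i a = H i b) :
    isStoppingSet H {a, b} := by
  intro i
  by_cases hi : H i a = 1
  · rw [filter_insert, if_pos hi, filter_singleton, if_pos (hcol i ▸ hi),
      card_pair hab]
    decide
  · rw [filter_insert, if_neg hi, filter_singleton, if_neg (hcol i ▸ hi), card_empty]
    decide

/-- The top row of the column of `S` whose top is highest meets no other column of `S`. -/
lemma not_isStoppingSet_of_injOn (top : Fin n → Fin m) (h_top : ∀ j, H (top j) j = 1)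
    (h_le_top : ∀ i j, H i j = 1 → top j ≤ i) {S : Finset (Fin n)} (hS : S.Nonempty)
    (hinj : Set.InjOn top S) : ¬ isStoppingSet H S := by
  obtain ⟨j₀, hj₀, hmin⟩ := S.exists_min_image top hS
  intro hstop
  apply hstop (top j₀)
  rw [card_eq_one]
  refine ⟨j₀, ext fun j => ?_⟩
  simp only [mem_filter, mem_singleton]
  constructor
  · rintro ⟨hj, hone⟩
    exact hinj hj hj₀ (le_antisymm (h_le_top _ _ hone) (hmin j hj))
  · rintro rfl
    exact ⟨hj₀, h_top j⟩

lemma spanM_eq_len {S : Finset (Fin n)} (hS : S.Nonempty) (hstop : isStoppingSet H S)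
    (hmin : ∀ T : Finset (Fin n), T.Nonempty → isStoppingSet H T → len S ≤ len T) :
    spanM H = len S :=
  le_antisymm (Nat.sInf_le ⟨S, hS, hstop, rfl⟩)
    (le_csInf ⟨_, S, hS, hstop, rfl⟩ fun _ ⟨T, hT, hTstop, hlen⟩ => hlen ▸ hmin T hT hTstop)

end StoppingSets

section Bstar

variable {l k L : ℕ}

lemma fnat_div_eq_mod (hk : 0 < k) (hL : 0 < L) {j : ℕ} (hj : j < k * L) :
    fnat k L j / k = j % L := by
  rw [fnat, Nat.add_mul_div_right _ _ hk, Nat.div_eq_of_lt ((Nat.div_lt_iff_lt_mul hL).2 hj),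
    zero_add]

lemma Bstar_apply (hk : 0 < k) (hL : 0 < L) (p : Fin (L + l - 1)) (j : Fin (k * L)) :
    Bstar l k L p j = if (j : ℕ) % L ≤ p ∧ (p : ℕ) ≤ j % L + (l - 1) then 1 else 0 := by
  rw [Bstar, fnat_div_eq_mod hk hL j.isLt]

lemma Bstar_apply_eq_one_iff (hk : 0 < k) (hL : 0 < L) (p : Fin (L + l - 1))
    (j : Fin (k * L)) :
    Bstar l k L p j = 1 ↔ (j : ℕ) % L ≤ p ∧ (p : ℕ) ≤ j % L + (l - 1) := by
  rw [Bstar_apply hk hL]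
  split_ifs with h
  · exact iff_of_true rfl h
  · exact iff_of_false (by decide) h

lemma Bstar_apply_eq_of_mod_eq (hk : 0 < k) (hL : 0 < L) (p : Fin (L + l - 1))
    {a b : Fin (k * L)} (hab : (a : ℕ) % L = b % L) : Bstar l k L p a = Bstar l k L p b := by
  rw [Bstar_apply hk hL, Bstar_apply hk hL, hab]

lemma isStoppingSet_Bstar_zero_L (hk : 2 ≤ k) (hL : 0 < L) :
    isStoppingSet (Bstar l k L) {⟨0, by nlinarith⟩, ⟨L, by nlinarith⟩} :=
  isStoppingSet_pair (by simp [Fin.ext_iff]; omega) fun p =>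
    Bstar_apply_eq_of_mod_eq (by omega) hL p (by simp)

lemma lt_len_of_isStoppingSet_Bstar (hl : 0 < l) (hk : 0 < k) (hL : 0 < L)
    {S : Finset (Fin (k * L))} (hS : S.Nonempty) (hstop : isStoppingSet (Bstar l k L) S) :
    L < len S := by
  by_contra! hlen
  let top : Fin (k * L) → Fin (L + l - 1) := fun j => ⟨j % L, by have := Nat.mod_lt j hL; omega⟩
  refine not_isStoppingSet_of_injOn top (fun j => ?_) (fun p j hp => ?_) hS ?_ hstop
  · exact (Bstar_apply_eq_one_iff hk hL _ j).2 ⟨le_rfl, Nat.le_add_right _ _⟩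
  · exact ((Bstar_apply_eq_one_iff hk hL p j).1 hp).1
  · intro a ha b hb hab
    have hab' := sub_lt_len ha hb
    have hba := sub_lt_len hb ha
    refine Fin.ext (Nat.ModEq.eq_of_abs_lt (congrArg Fin.val hab) ?_)
    rw [abs_lt]
    omega

end Bstar

/-- The span of the permuted base matrix `B*(l,r,L)` equals `L + 1`, and thus
`W_max(B*) = Span - 1 = L`. -/
theorem span_Bstar (l k L : ℕ) (hl : 0 < l) (hk : 2 ≤ k) (hL : 0 < L) :
    spanM (Bstar l k L) = L + 1 ∧ spanM (Bstar l k L) - 1 = L := by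
  have hlen : len {(⟨0, by nlinarith⟩ : Fin (k * L)), ⟨L, by nlinarith⟩} = L + 1 :=
    len_pair (Fin.mk_le_mk.2 (Nat.zero_le L))
  have hspan : spanM (Bstar l k L) = L + 1 := by
    rw [← hlen]
    exact spanM_eq_len (insert_nonempty _ _) (isStoppingSet_Bstar_zero_L hk hL)
      fun T hT hstop => hlen ▸ lt_len_of_isStoppingSet_Bstar hl (by omega) hL hT hstop
  exact ⟨hspan, by omega⟩
end
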